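/- Let T > 0, a > 0 and let σ : [0,T] → ℝ be continuous and positive. Then the QMLE asymptotic variance dominates the efficiency bound: 5·T·a·(∫₀^T σ(u)⁴ du)/(∫₀^T σ(u)² du)^{1/2} + 3·a·(∫₀^T σ(u)² du)^{3/2} ≥ 8·a·T^{1/2}·∫₀^T σ(u)³ du; equivalently, since the ratio equals (5 + 3ρ²)/(8κρ^{1/2}) with ρ = ρ_{0,T} ≤ 1 and κ = κ_{0,T} ≤ ρ^{1/2}, the QMLE loss L^{(QMLE)} is nonnegative. -/

import Mathlib

set_option maxHeartbeats 1000000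

open MeasureTheory

/-- Cauchy–Schwarz for interval integrals. -/
lemma cs_interval (f g : ℝ → ℝ) (T : ℝ) (hT : 0 ≤ T)
    (hf2 : IntervalIntegrable (fun u => f u ^ 2) volume 0 T)
    (hg2 : IntervalIntegrable (fun u => g u ^ 2) volume 0 T)
    (hfg : IntervalIntegrable (fun u => f u * g u) volume 0 T)
    (hG : 0 < ∫ u in (0:ℝ)..T, g u ^ 2) :
    (∫ u in (0:ℝ)..T, f u * g u) ^ 2
      ≤ (∫ u in (0:ℝ)..T, f u ^ 2) * ∫ u in (0:ℝ)..T, g u ^ 2 := by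
  set F2 := ∫ u in (0:ℝ)..T, f u ^ 2
  set G2 := ∫ u in (0:ℝ)..T, g u ^ 2
  set FG := ∫ u in (0:ℝ)..T, f u * g u
  set t : ℝ := -FG / G2 with ht
  have h0 : 0 ≤ ∫ u in (0:ℝ)..T, (f u + t * g u) ^ 2 :=
    intervalIntegral.integral_nonneg hT (fun u _ => sq_nonneg _)
  have hexp : ∫ u in (0:ℝ)..T, (f u + t * g u) ^ 2
      = F2 + 2 * t * FG + t ^ 2 * G2 := by
    have h1 : ∀ u, (f u + t * g u) ^ 2
        = f u ^ 2 + (2 * t) * (f u * g u) + t ^ 2 * g u ^ 2 := by intro u; ring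
    simp only [h1]
    rw [intervalIntegral.integral_add (hf2.add (hfg.const_mul _)) (hg2.const_mul _),
        intervalIntegral.integral_add hf2 (hfg.const_mul _),
        intervalIntegral.integral_const_mul, intervalIntegral.integral_const_mul]
  rw [hexp] at h0
  have hG' : G2 ≠ 0 := hG.ne'
  have ht' : t * G2 = -FG := by rw [ht]; field_simp
  nlinarith [h0, hG, sq_nonneg (t * G2 + FG)]

/-- The QMLE asymptotic variance dominates the efficiency bound, i.e. the QMLE
loss is nonnegative. -/
theorem stmt17 (T a : ℝ) (hT : 0 < T) (ha : 0 < a) (σ : ℝ → ℝ)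
    (hcont : ContinuousOn σ (Set.Icc 0 T))
    (hpos : ∀ u ∈ Set.Icc (0 : ℝ) T, 0 < σ u) :
    (5 * T * a * (∫ u in (0:ℝ)..T, σ u ^ 4) /
          (∫ u in (0:ℝ)..T, σ u ^ 2) ^ ((1 : ℝ) / 2)
        + 3 * a * (∫ u in (0:ℝ)..T, σ u ^ 2) ^ ((3 : ℝ) / 2)
      ≥ 8 * a * T ^ ((1 : ℝ) / 2) * ∫ u in (0:ℝ)..T, σ u ^ 3) ∧
    ((5 * T * a * (∫ u in (0:ℝ)..T, σ u ^ 4) /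
          (∫ u in (0:ℝ)..T, σ u ^ 2) ^ ((1 : ℝ) / 2)
        + 3 * a * (∫ u in (0:ℝ)..T, σ u ^ 2) ^ ((3 : ℝ) / 2)) /
          (8 * a * T ^ ((1 : ℝ) / 2) * ∫ u in (0:ℝ)..T, σ u ^ 3) - 1 ≥ 0) := by
  have huIcc : Set.uIcc (0:ℝ) T = Set.Icc 0 T := Set.uIcc_of_le hT.le
  have hci : ∀ n : ℕ, IntervalIntegrable (fun u => σ u ^ n) volume 0 T := by
    intro n
    apply ContinuousOn.intervalIntegrable
    rw [huIcc]; exact hcont.pow n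
  set A := ∫ u in (0:ℝ)..T, σ u ^ 2 with hAdef
  set B := ∫ u in (0:ℝ)..T, σ u ^ 3 with hBdef
  set C := ∫ u in (0:ℝ)..T, σ u ^ 4 with hCdef
  have hposn : ∀ n : ℕ, 0 < n → 0 < ∫ u in (0:ℝ)..T, σ u ^ n := by
    intro n hn
    apply intervalIntegral.intervalIntegral_pos_of_pos_on (hci n) _ hT
    intro x hx
    exact pow_pos (hpos x ⟨hx.1.le, hx.2.le⟩) n
  have hA : 0 < A := hposn 2 (by norm_num)
  have hB : 0 < B := hposn 3 (by norm_num)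
  have hC : 0 < C := hposn 4 (by norm_num)
  -- Cauchy-Schwarz: B² ≤ A * C
  have hCS1 : B ^ 2 ≤ A * C := by
    have h := cs_interval σ (fun u => σ u ^ 2) T hT.le (hci 2)
      (by simpa [pow_mul, ← pow_mul] using hci 4)
      (by simpa [← pow_succ'] using hci 3) ?_
    · have e1 : (∫ u in (0:ℝ)..T, σ u * σ u ^ 2) = B := by
        rw [hBdef]; congr 1; funext u; ring
      have e2 : (∫ u in (0:ℝ)..T, (σ u ^ 2) ^ 2) = C := by
        rw [hCdef]; congr 1; funext u; ring
      rwa [e1, e2] at h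
    · have e2 : (∫ u in (0:ℝ)..T, (σ u ^ 2) ^ 2) = C := by
        rw [hCdef]; congr 1; funext u; ring
      rw [e2]; exact hC
  -- Cauchy-Schwarz: A² ≤ T * C
  have hCS2 : A ^ 2 ≤ T * C := by
    have h := cs_interval (fun _ => (1:ℝ)) (fun u => σ u ^ 2) T hT.le
      (by simpa using (intervalIntegrable_const : IntervalIntegrable (fun _ => (1:ℝ)) volume 0 T))
      (by simpa [pow_mul, ← pow_mul] using hci 4)
      (by simpa using hci 2) ?_
    · have e1 : (∫ u in (0:ℝ)..T, (1:ℝ) * σ u ^ 2) = A := by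
        rw [hAdef]; congr 1; funext u; ring
      have e2 : (∫ u in (0:ℝ)..T, (σ u ^ 2) ^ 2) = C := by
        rw [hCdef]; congr 1; funext u; ring
      have e3 : (∫ u in (0:ℝ)..T, (1:ℝ) ^ 2) = T := by simp
      rwa [e1, e2, e3] at h
    · have e2 : (∫ u in (0:ℝ)..T, (σ u ^ 2) ^ 2) = C := by
        rw [hCdef]; congr 1; funext u; ring
      rw [e2]; exact hC
  -- rpow to sqrt
  have hA12 : A ^ ((1:ℝ)/2) = Real.sqrt A := (Real.sqrt_eq_rpow A).symm
  have hT12 : T ^ ((1:ℝ)/2) = Real.sqrt T := (Real.sqrt_eq_rpow T).symm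
  have hA32 : A ^ ((3:ℝ)/2) = Real.sqrt A ^ 3 := by
    rw [show ((3:ℝ)/2) = (1/2) * 3 by ring, Real.rpow_mul hA.le, ← Real.sqrt_eq_rpow,
        show ((3:ℝ)) = ((3:ℕ):ℝ) by norm_num, Real.rpow_natCast]
  set s := Real.sqrt A with hs
  set q := Real.sqrt T with hq
  set c := Real.sqrt C with hc
  have hs2 : s ^ 2 = A := Real.sq_sqrt hA.le
  have hq2 : q ^ 2 = T := Real.sq_sqrt hT.le
  have hc2 : c ^ 2 = C := Real.sq_sqrt hC.le
  have hspos : 0 < s := Real.sqrt_pos.mpr hA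
  have hqpos : 0 < q := Real.sqrt_pos.mpr hT
  have hcpos : 0 < c := Real.sqrt_pos.mpr hC
  have hAC : A * C = (s * c) ^ 2 := by rw [mul_pow, hs2, hc2]
  have hTC : T * C = (q * c) ^ 2 := by rw [mul_pow, hq2, hc2]
  clear_value A B C s q c
  -- B ≤ s * c
  have hBle : B ≤ s * c := by
    nlinarith [hCS1, hAC, mul_pos hspos hcpos, hB]
  -- A ≤ q * c
  have hAle : A ≤ q * c := by
    nlinarith [hCS2, hTC, mul_pos hqpos hcpos, hA]
  have key : 8 * a * q * B ≤ 5 * T * a * C / s + 3 * a * s ^ 3 := by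
    rw [div_add' _ _ _ hspos.ne', le_div_iff₀ hspos]
    have h1 : 8 * a * q * B * s ≤ 8 * a * q * (s * c) * s := by
      have : 0 ≤ 8 * a * q * s := by positivity
      nlinarith [mul_le_mul_of_nonneg_left hBle this]
    have h2 : 8 * a * q * (s * c) * s = 8 * a * A * (q * c) := by
      rw [← hs2]; ring
    have h3 : 8 * a * A * (q * c) ≤ 5 * a * (q * c) ^ 2 + 3 * a * A ^ 2 := by
      nlinarith [mul_nonneg ha.le (mul_nonneg (sub_nonneg.2 hAle)
        (by linarith : (0:ℝ) ≤ 5 * (q * c) - 3 * A))]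
    have h4 : 5 * a * (q * c) ^ 2 = 5 * T * a * C := by rw [← hTC]; ring
    have h5 : 3 * a * A ^ 2 = 3 * a * s ^ 3 * s := by rw [← hs2]; ring
    linarith [h1, h2.le, h3]
  have main : 5 * T * a * C / A ^ ((1:ℝ)/2) + 3 * a * A ^ ((3:ℝ)/2)
      ≥ 8 * a * T ^ ((1:ℝ)/2) * B := by
    rw [hA12, hT12, hA32]; exact key
  refine ⟨main, ?_⟩
  have hD : 0 < 8 * a * T ^ ((1:ℝ)/2) * B := by
    rw [hT12]; positivity
  rw [ge_iff_le, sub_nonneg, le_div_iff₀ hD, one_mul]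
  exact main
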